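/- Let J : ℕ × ℕ × {0,1} → ℝ be a nonnegative function belonging to the class ℱ, and let T be the intermediate-value function obtained from J. Then T satisfies the supermodularity property (F6): for all x, q₁ ∈ ℕ, T(x,q₁,1) + T(x,q₁+1,0) ≤ T(x,q₁,0) + T(x,q₁+1,1). -/

import Mathlib

/-- The class ℱ of functions `f : ℕ × ℕ × {0,1} → ℝ` (with `l₂ : Fin 2`)
satisfying the nine properties (F1)–(F9) together with nonnegativity. -/
structure InClassF (f : ℕ → ℕ → Fin 2 → ℝ) : Prop where
  nonneg : ∀ x q₁ l₂, 0 ≤ f x q₁ l₂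
  F1 : ∀ x q₁, f (x+1) q₁ 0 + f (x+1) q₁ 1 ≤ f x q₁ 1 + f (x+2) q₁ 0
  F2 : ∀ x q₁, f (x+1) q₁ 0 + f x (q₁+1) 1 ≤ f x q₁ 1 + f (x+1) (q₁+1) 0
  F3 : ∀ q₁, f 0 (q₁+1) 0 + f 0 (q₁+1) 1 ≤ f 0 q₁ 1 + f 0 (q₁+2) 0
  F4 : ∀ x q₁ l₂, f x (q₁+1) l₂ ≤ f (x+1) q₁ l₂
  F5 : ∀ x q₁, f x q₁ 1 + f (x+1) q₁ 0 ≤ f x q₁ 0 + f (x+1) q₁ 1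
  F6 : ∀ x q₁, f x q₁ 1 + f x (q₁+1) 0 ≤ f x q₁ 0 + f x (q₁+1) 1
  F7 : ∀ x q₁ l₂, f x q₁ l₂ ≤ f (x+1) q₁ l₂
  F8 : ∀ x q₁ l₂, f x q₁ l₂ ≤ f x (q₁+1) l₂
  F9 : ∀ x q₁, f x q₁ 0 ≤ f x q₁ 1

/-- The intermediate-value function `T` obtained from `J`:
`T(x,q₁,1) = J(x,q₁,1)`, `T(0,0,0) = J(0,0,0)`,
`T(x,q₁,0) = min{J(x,q₁,0), J(x−1,q₁,1)}` for `x ≥ 1`, and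
`T(0,q₁,0) = min{J(0,q₁,0), J(0,q₁−1,1)}` for `q₁ ≥ 1`. -/
noncomputable def interT (J : ℕ → ℕ → Fin 2 → ℝ) : ℕ → ℕ → Fin 2 → ℝ :=
  fun x q₁ l₂ =>
    if l₂ = (1 : Fin 2) then J x q₁ 1
    else
      match x, q₁ with
      | 0, 0 => J 0 0 0
      | x' + 1, q' => min (J (x' + 1) q' 0) (J x' q' 1)
      | 0, q' + 1 => min (J 0 (q' + 1) 0) (J 0 q' 1)

/-!
Since `T(·,·,1) = J(·,·,1)` and `T(x,q₁,0)` is a minimum of two values of `J`, it suffices to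
compare the left-hand side with each of the two sums `J(x,q₁,0) + J(x,q₁+1,1)` and
`J(x−1,q₁,1) + J(x,q₁+1,1)` (resp. `J(0,q₁−1,1) + J(0,q₁+1,1)`), each time bounding
`T(x,q₁+1,0)` by the matching term of its own minimum. The first comparison is (F6) for `J`;
the second is supermodularity of `J(·,·,1)`, which is (F2) + (F6), or at `x = 0` midpoint
convexity of `J(0,·,1)`, which is (F3) + (F6).
-/

theorem add_min_le_min_add {α : Type*} [AddCommGroup α] [LinearOrder α] [IsOrderedAddMonoid α]
    {a b c d e f : α} (h₁ : a + b ≤ d + f) (h₂ : a + c ≤ e + f) :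
    a + min b c ≤ min d e + f := by
  rw [← min_add_add_left, ← min_add_add_right]
  exact min_le_min h₁ h₂

namespace InClassF

variable {J : ℕ → ℕ → Fin 2 → ℝ}

theorem supermodular_one (hJ : InClassF J) (x q₁ : ℕ) :
    J (x + 1) q₁ 1 + J x (q₁ + 1) 1 ≤ J x q₁ 1 + J (x + 1) (q₁ + 1) 1 := by
  linarith [hJ.F2 x q₁, hJ.F6 (x + 1) q₁]

theorem midpoint_convex_zero_one (hJ : InClassF J) (q₁ : ℕ) :
    J 0 (q₁ + 1) 1 + J 0 (q₁ + 1) 1 ≤ J 0 q₁ 1 + J 0 (q₁ + 2) 1 := by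
  linarith [hJ.F3 q₁, hJ.F6 0 (q₁ + 1)]

end InClassF

section interT

variable (J : ℕ → ℕ → Fin 2 → ℝ)

@[simp]
theorem interT_one (x q₁ : ℕ) : interT J x q₁ 1 = J x q₁ 1 := rfl

@[simp]
theorem interT_zero_zero_zero : interT J 0 0 0 = J 0 0 0 := rfl

@[simp]
theorem interT_succ_zero (x q₁ : ℕ) :
    interT J (x + 1) q₁ 0 = min (J (x + 1) q₁ 0) (J x q₁ 1) := rfl

@[simp]
theorem interT_zero_succ_zero (q₁ : ℕ) :
    interT J 0 (q₁ + 1) 0 = min (J 0 (q₁ + 1) 0) (J 0 q₁ 1) := rfl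

end interT

theorem stmt_11 (J : ℕ → ℕ → Fin 2 → ℝ) (hJ : InClassF J) :
    ∀ x q₁ : ℕ,
      interT J x q₁ 1 + interT J x (q₁ + 1) 0
        ≤ interT J x q₁ 0 + interT J x (q₁ + 1) 1 := by
  intro x q₁
  rcases x with _ | x
  · rcases q₁ with _ | q₁
    · simp only [interT_one, interT_zero_zero_zero, zero_add, interT_zero_succ_zero]
      linarith [hJ.F6 0 0, min_le_left (J 0 1 0) (J 0 0 1)]
    · simp only [interT_one, interT_zero_succ_zero]
      exact add_min_le_min_add (hJ.F6 0 (q₁ + 1)) (hJ.midpoint_convex_zero_one q₁)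
  · simp only [interT_one, interT_succ_zero]
    exact add_min_le_min_add (hJ.F6 (x + 1) q₁) (hJ.supermodular_one x q₁)
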